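/- arXiv:2008.13079 — 3 statements merged into one kernel-verified Lean document; each statement's English description precedes it below -/
import Mathlib

section
/- Let s ∈ ℂ with s ≠ 1 and let m ≥ 1 be an integer. For j ∈ {0,…,m−1} and integers n ≥ 0 define S_j(n) = (ζ(s) − ζ(s, n+1)) − m^{1−s}·(ζ(s) − ζ(s, (n−j)/m + 1)) (principal power m^{1−s}). Then: (a) if Re(s) > 1, then for every j ∈ {0,…,m−1} and every integer n ≥ j with n ≡ j (mod m), S_j(n) = Σ_{i=1}^{n} i^{−s} − m·Σ_{i=1}^{(n−j)/m} (m i)^{−s}; and (b) for every integer n ≥ 0, (1/m) Σ_{j=0}^{m−1} S_j(n) = (1 − m^{1−s})·ζ(s). In particular the renormalized value of the series Σ_{n≥1} 1/n^s is ζ(s), with critical exponent 1−s. -/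
open MeasureTheory Filter Set

noncomputable section

/-- The Laplace transform `ℒ(φ)(t) = ∫₀^∞ e^{−tu} φ(u) du`. -/
def Lap (φ : ℝ → ℂ) (t : ℝ) : ℂ :=
  ∫ u in Ioi (0:ℝ), Complex.exp (-(t * u : ℝ)) * φ u

/-- Membership in the domain `𝒟(ℒ)` of the Laplace transform:
measurable, integrable on `(0,R)` for all `R > 0`, and
`∫₀^∞ e^{−xu} |φ(u)| du < ∞` for every `x > 0`. -/
def MemDL (φ : ℝ → ℂ) : Prop :=
  Measurable φ ∧
  (∀ R > 0, IntegrableOn φ (Ioo 0 R)) ∧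
  (∀ x > 0, IntegrableOn (fun u => Real.exp (-(x * u)) * ‖φ u‖) (Ioi 0))

/-- The forward difference operator with step `h`: `(Δ_h f)(t) = f(t+h) − f(t)`. -/
def Dh (h : ℝ) (f : ℝ → ℂ) : ℝ → ℂ := fun t => f (t + h) - f t

/-- The `n`-th term of the Bernoulli-operator series: `(−1)^n (Δ_h^n f)(t)/(n+1)`. -/
def BTerm (h : ℝ) (f : ℝ → ℂ) (n : ℕ) (t : ℝ) : ℂ :=
  ((-1 : ℂ) ^ n / (n + 1)) * (Dh h)^[n] f t

/-- The Bernoulli operator `(B_h f)(t) = Σ_{n≥0} (−1)^n (Δ_h^n f)(t)/(n+1)`. -/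
def Bop (h : ℝ) (f : ℝ → ℂ) (t : ℝ) : ℂ := ∑' n : ℕ, BTerm h f n t

/-- Generalized binomial coefficient `binom(h,n) = h(h−1)⋯(h−n+1)/n!`. -/
def gbinom (h : ℝ) (n : ℕ) : ℝ :=
  (∏ i ∈ Finset.range n, (h - i)) / n.factorial

/-- The `n`-th term of the Newton series: `binom(h,n) (Δ^n f)(t)`. -/
def NTerm (h : ℝ) (f : ℝ → ℂ) (n : ℕ) (t : ℝ) : ℂ :=
  (gbinom h n : ℂ) * (Dh 1)^[n] f t

/-- The fractional shift `(E^h f)(t) = Σ_{n≥0} binom(h,n) (Δ^n f)(t)`. -/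
def Nop (h : ℝ) (f : ℝ → ℂ) (t : ℝ) : ℂ := ∑' n : ℕ, NTerm h f n t

/-- The series `Σ g n` converges absolutely (pointwise on `S`) and its partial sums
converge locally uniformly on `S`. -/
def ALUOn (g : ℕ → ℝ → ℂ) (S : Set ℝ) : Prop :=
  (∀ t ∈ S, Summable fun n : ℕ => ‖g n t‖) ∧
  TendstoLocallyUniformlyOn (fun N t => ∑ n ∈ Finset.range N, g n t)
    (fun t => ∑' n : ℕ, g n t) atTop S

/-- The Laplace–Mellin transform `f_{−s}(t) = (1/Γ(s)) ∫₀^∞ e^{−tu} φ(u) u^{s−1} du`. -/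
def LM (φ : ℝ → ℂ) (s : ℂ) (t : ℝ) : ℂ :=
  (1 / Complex.Gamma s) *
    ∫ u in Ioi (0:ℝ), Complex.exp (-(t * u : ℝ)) * φ u * (u : ℂ) ^ (s - 1)

/-- `φ(u) = o(u^γ)` as `u → 0⁺`, i.e. `|φ(u)| u^{−Re γ} → 0`. -/
def SmallO (φ : ℝ → ℂ) (γ : ℂ) : Prop :=
  Tendsto (fun u : ℝ => ‖φ u‖ * u ^ (-γ.re)) (nhdsWithin 0 (Ioi 0)) (nhds 0)

/-- Membership in `𝒟^ι(ℒ)`: `φ ∈ 𝒟(ℒ)` dominated by a nondecreasing `ψ ∈ 𝒟(ℒ)`. -/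
def MemDLi (φ : ℝ → ℂ) : Prop :=
  MemDL φ ∧ ∃ ψ : ℝ → ℝ, MemDL (fun u => (ψ u : ℂ)) ∧ MonotoneOn ψ (Ioi 0) ∧
    ∀ u ∈ Ioi (0:ℝ), ‖φ u‖ ≤ ψ u

/-- Membership in the class `ℋ`, with the witness `φ` recorded:
(1) `t ↦ f(s,t)` differentiable on `(0,∞)`;
(2) `s ↦ f(s,t)` and `s ↦ ∂ₜf(s,t)` entire;
(3) `f(−1,·) = ℒ(φ)` with `φ ∈ 𝒟^ι(ℒ)`;
(4) `f(−s,t)` is the Laplace–Mellin transform of `φ` for `Re s > 1`. -/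
def MemHwith (f : ℂ → ℝ → ℂ) (φ : ℝ → ℂ) : Prop :=
  (∀ s : ℂ, ∀ t ∈ Ioi (0:ℝ), DifferentiableAt ℝ (f s) t) ∧
  (∀ t ∈ Ioi (0:ℝ), Differentiable ℂ fun s => f s t) ∧
  (∀ t ∈ Ioi (0:ℝ), Differentiable ℂ fun s => deriv (f s) t) ∧
  MemDLi φ ∧
  (∀ t ∈ Ioi (0:ℝ), f (-1) t = Lap φ t) ∧
  (∀ s : ℂ, 1 < s.re → ∀ t ∈ Ioi (0:ℝ), f (-s) t = LM φ s t)

/-- Membership in the class `ℋ`. -/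
def MemH (f : ℂ → ℝ → ℂ) : Prop := ∃ φ : ℝ → ℂ, MemHwith f φ

/-- The Hurwitz zeta function `ζ(s,x)` for real `x > 0`: the meromorphic continuation in `s`
of `Σ_{k≥0} (k+x)^{−s}`, expressed via Mathlib's `HurwitzZeta.hurwitzZeta` on `ℝ/ℤ`. -/
def hurwitz (s : ℂ) (x : ℝ) : ℂ :=
  HurwitzZeta.hurwitzZeta (↑x : UnitAddCircle) s -
    ∑ k ∈ Finset.range ⌊x⌋₊,
      (if (k : ℝ) + Int.fract x = 0 then 0
       else (((k : ℝ) + Int.fract x : ℝ) : ℂ) ^ (-s))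

end


open Complex in
/-- Power of a quotient of positive reals. -/
lemma cpow_div_aux {a : ℝ} (ha : 0 ≤ a) {m : ℕ} (hm : 0 < m) (s : ℂ) :
    (((a / m : ℝ)) : ℂ) ^ (-s) = (m : ℂ) ^ s * ((a : ℝ) : ℂ) ^ (-s) := by
  have hm0 : (0:ℝ) ≤ (m : ℝ)⁻¹ := by positivity
  rw [div_eq_mul_inv, ofReal_mul, mul_cpow_ofReal_nonneg ha hm0, ofReal_inv, ofReal_natCast,
    inv_cpow _ _ (by rw [natCast_arg]; exact Real.pi_ne_zero.symm)]
  have h2 : ((m : ℂ) ^ (-s))⁻¹ = (m : ℂ) ^ s := by rw [← cpow_neg, neg_neg]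
  rw [h2, mul_comm]

/-- The Dirichlet series for `hurwitz` in the convergence range. -/
lemma hasSum_hurwitz {x : ℝ} (hx : 0 < x) {s : ℂ} (hs : 1 < s.re) :
    HasSum (fun k : ℕ => (((k : ℝ) + x : ℝ) : ℂ) ^ (-s)) (hurwitz s x) := by
  have hs0 : s ≠ 0 := fun h => by simp [h] at hs; linarith
  set a : ℝ := Int.fract x with ha_def
  have ha : a ∈ Icc (0:ℝ) 1 := ⟨Int.fract_nonneg x, (Int.fract_lt_one x).le⟩
  have hfl : ((⌊x⌋₊ : ℝ)) + a = x := by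
    rw [natCast_floor_eq_intCast_floor hx.le, ha_def, Int.floor_add_fract]
  have hcoe : (↑x : UnitAddCircle) = (↑a : UnitAddCircle) := by
    rw [← hfl]
    have : ((((⌊x⌋₊ : ℝ)) + a : ℝ) : UnitAddCircle) = ((⌊x⌋₊ : ℝ) : UnitAddCircle) + a := by
      rfl
    rw [this]
    have : ((⌊x⌋₊ : ℝ) : UnitAddCircle) = 0 := by
      rw [AddCircle.coe_eq_zero_iff]
      exact ⟨⌊x⌋₊, by simp⟩
    rw [this, zero_add]
  have key := HurwitzZeta.hasSum_hurwitzZeta_of_one_lt_re ha hs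
  have hterm : ∀ k : ℕ, (1 : ℂ) / ((k : ℂ) + a) ^ s = (((k : ℝ) + a : ℝ) : ℂ) ^ (-s) := by
    intro k
    rw [Complex.cpow_neg, one_div]
    push_cast
    rfl
  have key2 : HasSum (fun k : ℕ => (((k : ℝ) + a : ℝ) : ℂ) ^ (-s))
      (HurwitzZeta.hurwitzZeta (↑a : UnitAddCircle) s) :=
    key.congr_fun fun k => (hterm k).symm
  unfold hurwitz
  rw [hcoe]
  have hif : ∀ k : ℕ, (if (k : ℝ) + Int.fract x = 0 then 0
      else (((k : ℝ) + Int.fract x : ℝ) : ℂ) ^ (-s)) = (((k : ℝ) + a : ℝ) : ℂ) ^ (-s) := by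
    intro k
    rw [← ha_def]
    split_ifs with h
    · rw [h, Complex.ofReal_zero, Complex.zero_cpow (neg_ne_zero.mpr hs0)]
    · rfl
  rw [Finset.sum_congr rfl (fun k _ => hif k)]
  have h3 : HasSum (fun k : ℕ => (((k + ⌊x⌋₊ : ℕ) : ℝ) + a : ℝ) ^ (-s) : ℕ → ℂ)
      (HurwitzZeta.hurwitzZeta (↑a : UnitAddCircle) s
        - ∑ k ∈ Finset.range ⌊x⌋₊, (((k : ℝ) + a : ℝ) : ℂ) ^ (-s)) := by
    rw [hasSum_nat_add_iff (f := fun k : ℕ => ((((k : ℕ) : ℝ) + a : ℝ) : ℂ) ^ (-s)) ⌊x⌋₊,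
      sub_add_cancel]
    exact key2
  refine h3.congr_fun fun k => ?_
  congr 2
  push_cast
  linarith [hfl]

lemma hurwitz_nat (s : ℂ) (n : ℕ) :
    hurwitz s ((n : ℝ) + 1) = riemannZeta s - ∑ i ∈ Finset.range n, ((i : ℂ) + 1) ^ (-s) := by
  have hx : ((n : ℝ) + 1) = ((n + 1 : ℕ) : ℝ) := by push_cast; ring
  have hfr : Int.fract ((n : ℝ) + 1) = 0 := by rw [hx, Int.fract_natCast]
  have hfl : ⌊(n : ℝ) + 1⌋₊ = n + 1 := by rw [hx, Nat.floor_natCast]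
  have hcoe : (((n : ℝ) + 1 : ℝ) : UnitAddCircle) = 0 := by
    rw [AddCircle.coe_eq_zero_iff]
    exact ⟨(n : ℤ) + 1, by push_cast [zsmul_eq_mul]; ring⟩
  unfold hurwitz
  rw [hcoe, HurwitzZeta.hurwitzZeta_zero, hfr, hfl]
  congr 1
  rw [Finset.sum_range_succ']
  have h0 : (if ((0:ℕ) : ℝ) + 0 = 0 then (0:ℂ)
      else ((((0:ℕ) : ℝ) + 0 : ℝ) : ℂ) ^ (-s)) = 0 := by norm_num
  rw [h0, add_zero]
  refine Finset.sum_congr rfl fun i _ => ?_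
  rw [if_neg (by positivity)]
  norm_num

/-- Multiplication theorem in the convergence range. -/
lemma hurwitz_mult_of_lt {m : ℕ} (hm : 0 < m) {x : ℝ} (hx : 0 < x) {s : ℂ} (hs : 1 < s.re) :
    ∑ j ∈ Finset.range m, hurwitz s ((x + j) / m) = (m : ℂ) ^ s * hurwitz s x := by
  haveI : NeZero m := ⟨hm.ne'⟩
  have hsum := (hasSum_hurwitz hx hs).summable
  have h1 : hurwitz s x = ∑' k : ℕ, (((k : ℝ) + x : ℝ) : ℂ) ^ (-s) :=
    (hasSum_hurwitz hx hs).tsum_eq.symm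
  rw [h1, Nat.sumByResidueClasses hsum m, Finset.mul_sum]
  rw [← Finset.sum_nbij' (i := fun (j : ℕ) => (j : ZMod m)) (j := fun (i : ZMod m) => i.val)
    (t := Finset.univ)
    (hi := fun a _ => Finset.mem_univ _)
    (hj := fun b _ => Finset.mem_coe.mp (by simp [ZMod.val_lt]))
    (left_neg := fun a ha => ZMod.val_natCast_of_lt (Finset.mem_range.mp ha))
    (right_neg := fun b _ => ZMod.natCast_zmod_val b)
    (h := fun a ha => rfl)]
  refine Finset.sum_congr rfl fun j hj => ?_
  have hj' : j < m := Finset.mem_range.mp hj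
  have hv : ((j : ZMod m)).val = j := ZMod.val_natCast_of_lt hj'
  rw [hv]
  have hxj : 0 < (x + j) / m := by positivity
  have hh := hasSum_hurwitz hxj hs
  have hterm : ∀ k : ℕ, (((k : ℝ) + (x + j) / m : ℝ) : ℂ) ^ (-s)
      = (m : ℂ) ^ s * ((((j + m * k : ℕ) : ℝ) + x : ℝ) : ℂ) ^ (-s) := by
    intro k
    have harg : ((k : ℝ) + (x + j) / m) = (((j + m * k : ℕ) : ℝ) + x) / m := by
      have hm' : (m : ℝ) ≠ 0 := by positivity
      field_simp
      push_cast
      ring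
    rw [harg, cpow_div_aux (by positivity) hm]
  have hh2 : HasSum (fun k : ℕ => (m : ℂ) ^ s * ((((j + m * k : ℕ) : ℝ) + x : ℝ) : ℂ) ^ (-s))
      (hurwitz s ((x + j) / m)) := hh.congr_fun fun k => (hterm k).symm
  rw [← hh2.tsum_eq, tsum_mul_left]

/-- Multiplication theorem for all `s ≠ 1`, by analytic continuation. -/
lemma hurwitz_mult {m : ℕ} (hm : 0 < m) {x : ℝ} (hx : 0 < x) {s : ℂ} (hs : s ≠ 1) :
    ∑ j ∈ Finset.range m, hurwitz s ((x + j) / m) = (m : ℂ) ^ s * hurwitz s x := by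
  have hdiff : ∀ (y : ℝ) (z : ℂ), z ≠ 1 → DifferentiableAt ℂ (fun w => hurwitz w y) z := by
    intro y z hz
    unfold hurwitz
    refine DifferentiableAt.sub (HurwitzZeta.differentiableAt_hurwitzZeta _ hz) ?_
    refine DifferentiableAt.fun_sum fun k _ => ?_
    split_ifs with h
    · exact differentiableAt_const 0
    · exact (differentiableAt_id.neg).const_cpow (Or.inl (Complex.ofReal_ne_zero.mpr h))
  set U : Set ℂ := {z : ℂ | z ≠ 1} with hU_def
  have hUo : IsOpen U := isOpen_ne
  have hf : AnalyticOnNhd ℂ (fun z => ∑ j ∈ Finset.range m, hurwitz z ((x + j) / m)) U := by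
    refine DifferentiableOn.analyticOnNhd (fun z hz => ?_) hUo
    exact (DifferentiableAt.fun_sum fun j _ => hdiff _ _ hz).differentiableWithinAt
  have hg : AnalyticOnNhd ℂ (fun z => (m : ℂ) ^ z * hurwitz z x) U := by
    refine DifferentiableOn.analyticOnNhd (fun z hz => ?_) hUo
    exact ((differentiableAt_id.const_cpow
      (Or.inl (Nat.cast_ne_zero.mpr hm.ne'))).mul (hdiff _ _ hz)).differentiableWithinAt
  have hUc : IsPreconnected U := by
    have : U = {(1 : ℂ)}ᶜ := by ext z; simp [hU_def]
    rw [this]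
    exact (isConnected_compl_singleton_of_one_lt_rank
      (by simp) _).isPreconnected
  have hUmem : (2 : ℂ) ∈ U := by norm_num [hU_def]
  have hV : {z : ℂ | 1 < z.re} ∈ nhds (2 : ℂ) :=
    (Complex.continuous_re.isOpen_preimage _ isOpen_Ioi).mem_nhds (by norm_num)
  refine hf.eqOn_of_preconnected_of_eventuallyEq hg hUc hUmem ?_ hs
  filter_upwards [hV] with z hz
  exact hurwitz_mult_of_lt hm hx hz

/-- the zeta series is strongly renormalizable with renormalized value `ζ(s)`:
for `s ≠ 1`, `m ≥ 1`, and
`S_j(n) = (ζ(s) − ζ(s,n+1)) − m^{1−s} (ζ(s) − ζ(s,(n−j)/m + 1))`: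
(a) if `Re s > 1`, then for `j < m` and `n = j + mk ≡ j (mod m)`,
`S_j(n) = Σ_{i=1}^{n} i^{−s} − m Σ_{i=1}^{k} (mi)^{−s}`;
(b) for every `n`, `(1/m) Σ_{j=0}^{m−1} S_j(n) = (1 − m^{1−s}) ζ(s)`. -/
theorem stmt17 (s : ℂ) (hs : s ≠ 1) (m : ℕ) (hm : 1 ≤ m)
    (S : ℕ → ℕ → ℂ)
    (hS : S = fun (j n : ℕ) =>
      (riemannZeta s - hurwitz s ((n : ℝ) + 1)) -
        (m : ℂ) ^ (1 - s) *
          (riemannZeta s - hurwitz s (((n : ℝ) - (j : ℝ)) / m + 1))) :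
    (1 < s.re → ∀ j < m, ∀ k : ℕ,
      S j (j + m * k) =
        (∑ i ∈ Finset.range (j + m * k), ((i : ℂ) + 1) ^ (-s)) -
          (m : ℂ) * ∑ i ∈ Finset.range k, ((m : ℂ) * ((i : ℂ) + 1)) ^ (-s)) ∧
    ∀ n : ℕ,
      (1 / (m : ℂ)) * ∑ j ∈ Finset.range m, S j n =
        (1 - (m : ℂ) ^ (1 - s)) * riemannZeta s := by
  subst hS
  have hmN : m ≠ 0 := by omega
  have hm0 : (m : ℂ) ≠ 0 := Nat.cast_ne_zero.mpr hmN
  have hmR : (0 : ℝ) < (m : ℝ) := by positivity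
  have hpow : (m : ℂ) ^ (1 - s) * (m : ℂ) ^ s = (m : ℂ) := by
    rw [← Complex.cpow_add _ _ hm0, sub_add_cancel, Complex.cpow_one]
  have hpow1 : (m : ℂ) ^ (1 - s) = (m : ℂ) * (m : ℂ) ^ (-s) := by
    rw [sub_eq_add_neg, Complex.cpow_add _ _ hm0, Complex.cpow_one]
  constructor
  · -- part (a)
    intro hre j hj k
    simp only
    have harg : (((j + m * k : ℕ) : ℝ) - (j : ℝ)) / m + 1 = ((k : ℕ) : ℝ) + 1 := by
      rw [div_add' _ _ _ hmR.ne', div_eq_iff hmR.ne']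
      push_cast
      ring
    rw [harg, hurwitz_nat s (j + m * k), hurwitz_nat s k]
    have hterm : ∀ i : ℕ, (m : ℂ) ^ (1 - s) * ((i : ℂ) + 1) ^ (-s)
        = (m : ℂ) * ((m : ℂ) * ((i : ℂ) + 1)) ^ (-s) := by
      intro i
      have hcast : (m : ℂ) * ((i : ℂ) + 1) = (((m : ℝ) : ℂ)) * ((((i : ℝ) + 1 : ℝ)) : ℂ) := by
        push_cast; ring
      rw [hcast, Complex.mul_cpow_ofReal_nonneg (by positivity) (by positivity), hpow1]
      push_cast
      ring
    have hB : (m : ℂ) * ∑ i ∈ Finset.range k, ((m : ℂ) * ((i : ℂ) + 1)) ^ (-s)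
        = (m : ℂ) ^ (1 - s) * ∑ i ∈ Finset.range k, ((i : ℂ) + 1) ^ (-s) := by
      rw [Finset.mul_sum, Finset.mul_sum]
      exact Finset.sum_congr rfl fun i _ => (hterm i).symm
    rw [hB]
    ring
  · -- part (b)
    intro n
    simp only
    have hx : (0 : ℝ) < (n : ℝ) + 1 := by positivity
    have hmul : ∑ j ∈ Finset.range m, hurwitz s (((n : ℝ) - (j : ℝ)) / m + 1)
        = (m : ℂ) ^ s * hurwitz s ((n : ℝ) + 1) := by
      rw [← hurwitz_mult (Nat.pos_of_ne_zero hmN) hx hs]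
      rw [← Finset.sum_range_reflect (fun r => hurwitz s ((((n : ℝ) + 1) + r) / m)) m]
      refine Finset.sum_congr rfl fun j hj => ?_
      have hjm : j < m := Finset.mem_range.mp hj
      congr 1
      have hcast : ((m - 1 - j : ℕ) : ℝ) = (m : ℝ) - 1 - (j : ℝ) := by
        have h1 : (j : ℝ) ≤ (m : ℝ) - 1 := by
          have : (j : ℝ) + 1 ≤ (m : ℝ) := by exact_mod_cast hjm
          linarith
        push_cast [Nat.cast_sub (by omega : 1 ≤ m), Nat.cast_sub (by omega : j ≤ m - 1)]
        ring
      rw [hcast, div_add' _ _ _ hmR.ne']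
      ring_nf
    have hsum : ∑ j ∈ Finset.range m,
        ((riemannZeta s - hurwitz s ((n : ℝ) + 1)) -
          (m : ℂ) ^ (1 - s) * (riemannZeta s - hurwitz s (((n : ℝ) - (j : ℝ)) / m + 1)))
        = (m : ℂ) * (1 - (m : ℂ) ^ (1 - s)) * riemannZeta s := by
      rw [Finset.sum_sub_distrib, Finset.sum_const, Finset.card_range, ← Finset.mul_sum,
        Finset.sum_sub_distrib, Finset.sum_const, Finset.card_range, hmul]
      simp only [nsmul_eq_mul]
      linear_combination (hurwitz s ((n : ℝ) + 1)) * hpow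
    rw [hsum]
    field_simp
end

section
/- Let s ∈ ℂ with s ≠ 0 and let p_s : (0,∞) → ℂ, p_s(u) = u^s (principal power). Then for every t ∈ (0,1] the Bernoulli series Σ_{n=0}^∞ (−1)^n (Δ^n p_s)(t)/(n+1) converges and equals −s·ζ(1−s, t), where ζ(·,·) is the Hurwitz zeta function. -/
open MeasureTheory Filter Set

namespace Stmt18aux
open Complex

noncomputable def pc (s : ℂ) : ℝ → ℂ := fun u => (u:ℂ) ^ s

noncomputable def Fc (n : ℕ) (s : ℂ) (x : ℝ) : ℝ → ℂ :=
  fun v => ((Real.exp (-(x*v)) : ℝ) : ℂ) * (((Real.exp (-v) : ℝ) : ℂ) - 1)^n * (v:ℂ) ^ (-s-1)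

lemma integrable_exp_rpow {x β : ℝ} (hx : 0 < x) (hβ : 0 < β) :
    IntegrableOn (fun v : ℝ => Real.exp (-(x*v)) * v ^ (β-1)) (Ioi 0) := by
  have h0 := Real.GammaIntegral_convergent hβ
  rw [show (0:ℝ) = x * 0 by ring, ← integrableOn_Ioi_comp_mul_left_iff _ _ hx] at h0
  have h1 := h0.const_mul (x ^ (1-β))
  refine (IntegrableOn.congr_fun h1 (fun v hv => ?_) measurableSet_Ioi : IntegrableOn _ _ _)
  rw [mem_Ioi] at hv
  have : (x*v) ^ (β-1) = x ^ (β-1) * v ^ (β-1) := Real.mul_rpow hx.le hv.le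
  rw [this, show x ^ (1-β) * (Real.exp (-(x*v)) * (x ^ (β-1) * v ^ (β-1)))
      = (x ^ (1-β) * x ^ (β-1)) * (Real.exp (-(x*v)) * v ^ (β-1)) by ring,
    ← Real.rpow_add hx]
  norm_num

lemma exp_neg_lt_one {v : ℝ} (hv : 0 < v) : Real.exp (-v) < 1 := by
  rw [Real.exp_lt_one_iff]; linarith

lemma norm_Fc {n : ℕ} {s : ℂ} {x v : ℝ} (hv : 0 < v) :
    ‖Fc n s x v‖ = Real.exp (-(x*v)) * (1 - Real.exp (-v))^n * v ^ (-s.re-1) := by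
  have h1 : ‖((Real.exp (-(x*v)) : ℝ) : ℂ)‖ = Real.exp (-(x*v)) := by
    rw [norm_real, Real.norm_eq_abs, abs_of_pos (Real.exp_pos _)]
  have h2 : ‖(((Real.exp (-v) : ℝ) : ℂ) - 1)‖ = 1 - Real.exp (-v) := by
    rw [show (((Real.exp (-v) : ℝ) : ℂ) - 1) = ((Real.exp (-v) - 1 : ℝ) : ℂ) by push_cast; ring,
      norm_real, Real.norm_eq_abs, abs_of_nonpos (by linarith [exp_neg_lt_one hv])]
    ring
  have h3 : ‖(v:ℂ) ^ (-s-1)‖ = v ^ (-s.re-1) := by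
    rw [norm_cpow_eq_rpow_re_of_pos hv]
    norm_num
  rw [Fc, norm_mul, norm_mul, norm_pow, h1, h2, h3]

lemma cont_aux (n : ℕ) (x : ℝ) :
    Continuous (fun v : ℝ => Real.exp (-(x*v)) * (1 - Real.exp (-v))^n) := by
  have e1 : Continuous (fun v : ℝ => Real.exp (-(x*v))) :=
    Real.continuous_exp.comp (continuous_const.mul continuous_id).neg
  have e2 : Continuous (fun v : ℝ => (1 - Real.exp (-v))^n) :=
    ((continuous_const.sub (Real.continuous_exp.comp continuous_neg)).pow n)
  exact e1.mul e2

lemma integrableOn_one_sub_exp_pow_rpow {x β : ℝ} (hx : 0 < x) (hβ : 0 < β) (n : ℕ) :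
    IntegrableOn (fun v : ℝ => Real.exp (-(x*v)) * (1 - Real.exp (-v))^n * v ^ (β-1)) (Ioi 0) := by
  refine (integrable_exp_rpow hx hβ).mono' ?_ ?_
  · refine (ContinuousOn.aestronglyMeasurable ?_ measurableSet_Ioi)
    refine ContinuousOn.mul (cont_aux n x).continuousOn ?_
    intro v hv
    exact (Real.continuousAt_rpow_const v _ (Or.inl (ne_of_gt hv))).continuousWithinAt
  · filter_upwards [ae_restrict_mem measurableSet_Ioi] with v hv
    rw [mem_Ioi] at hv
    have h0 : (0:ℝ) ≤ 1 - Real.exp (-v) := by linarith [exp_neg_lt_one hv]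
    have hnn : (0:ℝ) ≤ Real.exp (-(x*v)) * (1 - Real.exp (-v))^n * v ^ (β-1) := by
      have := Real.rpow_nonneg hv.le (β-1)
      have := Real.exp_pos (-(x*v))
      positivity
    rw [Real.norm_of_nonneg hnn]
    have h1 : (1 - Real.exp (-v))^n ≤ 1 := pow_le_one₀ h0 (by linarith [Real.exp_pos (-v)])
    have h2 : (0:ℝ) ≤ v ^ (β-1) := Real.rpow_nonneg hv.le _
    exact mul_le_mul_of_nonneg_right (mul_le_of_le_one_right (Real.exp_pos _).le h1) h2

lemma contOn_Fc (n : ℕ) (s : ℂ) (x : ℝ) : ContinuousOn (Fc n s x) (Ioi 0) := by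
  refine ContinuousOn.mul (ContinuousOn.mul ?_ ?_) ?_
  · exact (continuous_ofReal.comp
      (Real.continuous_exp.comp (continuous_const.mul continuous_id).neg)).continuousOn
  · exact (((continuous_ofReal.comp (Real.continuous_exp.comp continuous_neg)).sub
      continuous_const).pow n).continuousOn
  · intro v hv
    exact (continuousAt_ofReal_cpow_const v _ (Or.inr (ne_of_gt hv))).continuousWithinAt

lemma integrable_Fc {n : ℕ} {s : ℂ} (hs : s.re < 0) {x : ℝ} (hx : 0 < x) :
    IntegrableOn (Fc n s x) (Ioi 0) := by
  refine (integrableOn_one_sub_exp_pow_rpow hx (by linarith : (0:ℝ) < -s.re) n).mono' ?_ ?_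
  · exact (contOn_Fc n s x).aestronglyMeasurable measurableSet_Ioi
  · filter_upwards [ae_restrict_mem measurableSet_Ioi] with v hv
    rw [norm_Fc hv]

end Stmt18aux

namespace Stmt18aux
open Complex

lemma arg_ne_pi {x : ℝ} (hx : 0 < x) : (x:ℂ).arg ≠ Real.pi := by
  rw [Complex.arg_ofReal_of_nonneg hx.le]
  exact ne_of_lt Real.pi_pos

lemma delta_eq_integral {s : ℂ} (hs : s.re < 0) (n : ℕ) :
    ∀ x : ℝ, 0 < x → (Dh 1)^[n] (pc s) x = (1 / Gamma (-s)) * ∫ v in Ioi (0:ℝ), Fc n s x v := by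
  have hres : 0 < (-s).re := by simpa using (by linarith : -s.re > 0)
  have hG : Gamma (-s) ≠ 0 := Complex.Gamma_ne_zero_of_re_pos hres
  induction n with
  | zero =>
    intro x hx
    have key : ∫ v in Ioi (0:ℝ), Fc 0 s x v
        = ((1 / (x:ℂ)) ^ (-s)) * Gamma (-s) := by
      rw [← integral_cpow_mul_exp_neg_mul_Ioi hres hx]
      refine setIntegral_congr_fun measurableSet_Ioi (fun v hv => ?_)
      rw [Fc]
      push_cast
      ring
    simp only [Function.iterate_zero, id_eq, pc]
    rw [key, show (1/Gamma (-s)) * ((1/(x:ℂ))^(-s) * Gamma (-s))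
        = (1/(x:ℂ))^(-s) * ((1/Gamma (-s)) * Gamma (-s)) by ring,
      one_div_mul_cancel hG, mul_one, one_div, inv_cpow _ _ (arg_ne_pi hx), cpow_neg, inv_inv]
  | succ n ih =>
    intro x hx
    rw [Function.iterate_succ_apply',
      show Dh 1 ((Dh 1)^[n] (pc s)) x = (Dh 1)^[n] (pc s) (x+1) - (Dh 1)^[n] (pc s) x from rfl,
      ih (x+1) (by linarith), ih x hx, ← mul_sub,
      ← integral_sub (integrable_Fc hs (by linarith)) (integrable_Fc hs hx)]
    congr 1
    refine setIntegral_congr_fun measurableSet_Ioi (fun v hv => ?_)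
    rw [mem_Ioi] at hv
    have hE : Real.exp (-((x+1)*v)) = Real.exp (-(x*v)) * Real.exp (-v) := by
      rw [← Real.exp_add]; ring_nf
    simp only [Fc]
    rw [hE]
    push_cast
    rw [pow_succ]
    ring

end Stmt18aux

namespace Stmt18aux
open Complex

lemma contAt_delta (w : ℂ) (k : ℕ) : ∀ x : ℝ, 0 < x → ContinuousAt ((Dh 1)^[k] (pc w)) x := by
  induction k with
  | zero =>
    intro x hx
    exact continuousAt_ofReal_cpow_const x w (Or.inr hx.ne')
  | succ k ih =>
    intro x hx
    rw [Function.iterate_succ_apply']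
    have hc : ContinuousAt (fun y : ℝ => y + 1) x := (continuous_add_right 1).continuousAt
    have h1 : ContinuousAt (fun y : ℝ => (Dh 1)^[k] (pc w) (y + 1)) x :=
      ContinuousAt.comp (ih (x+1) (by linarith)) hc
    exact (h1.sub (ih x hx))

lemma delta_succ_eq_integral {w : ℂ} (hw : w ≠ 0) (k : ℕ) :
    ∀ x : ℝ, 0 < x →
      (Dh 1)^[k+1] (pc w) x = w * ∫ u in (0:ℝ)..1, (Dh 1)^[k] (pc (w-1)) (x+u) := by
  induction k with
  | zero =>
    intro x hx
    have hderiv : ∀ u ∈ uIcc x (x+1), HasDerivAt (fun y : ℝ => (y:ℂ)^w) (w * (u:ℂ)^(w-1)) u := by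
      intro u hu
      rw [uIcc_of_le (by linarith : x ≤ x+1)] at hu
      have hu0 : (0:ℝ) < u := lt_of_lt_of_le hx hu.1
      have h := hasDerivAt_ofReal_cpow_const' hu0.ne' (show w - 1 ≠ -1 by
        intro h; apply hw; rw [← sub_add_cancel w 1, h]; ring)
      rw [sub_add_cancel] at h
      have h2 := h.const_mul w
      have he : (fun y : ℝ => w * ((y:ℂ)^w / w)) = fun y : ℝ => (y:ℂ)^w := by
        funext y; field_simp
      rw [he] at h2
      exact h2
    have hint : IntervalIntegrable (fun u : ℝ => w * (u:ℂ)^(w-1)) MeasureTheory.volume x (x+1) := by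
      apply ContinuousOn.intervalIntegrable
      intro u hu
      rw [uIcc_of_le (by linarith : x ≤ x+1)] at hu
      have hu0 : (0:ℝ) < u := lt_of_lt_of_le hx hu.1
      exact (continuousAt_const.mul
        (continuousAt_ofReal_cpow_const u _ (Or.inr hu0.ne'))).continuousWithinAt
    have key := intervalIntegral.integral_eq_sub_of_hasDerivAt hderiv hint
    have comp := intervalIntegral.integral_comp_add_left
      (a := (0:ℝ)) (b := (1:ℝ)) (fun u : ℝ => (Dh 1)^[0] (pc (w-1)) u) x
    simp only [Function.iterate_zero, id_eq, add_zero] at comp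
    rw [show (Dh 1)^[0+1] (pc w) x = pc w (x+1) - pc w x from rfl]
    simp only [Function.iterate_zero, id_eq]
    rw [comp]
    rw [intervalIntegral.integral_const_mul] at key
    rw [show (∫ u in x..x+1, pc (w-1) u) = ∫ u in x..x+1, ((u:ℝ):ℂ)^(w-1) from rfl, key]
    simp only [pc]
  | succ k ih =>
    intro x hx
    have hint : ∀ z : ℝ, 0 < z → IntervalIntegrable
        (fun u : ℝ => (Dh 1)^[k] (pc (w-1)) (z+u)) MeasureTheory.volume 0 1 := by
      intro z hz
      apply ContinuousOn.intervalIntegrable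
      intro u hu
      rw [uIcc_of_le (by norm_num : (0:ℝ) ≤ 1)] at hu
      exact ((contAt_delta (w-1) k (z+u) (by linarith [hu.1])).comp
        (by fun_prop : ContinuousAt (fun u : ℝ => z + u) u)).continuousWithinAt
    rw [Function.iterate_succ_apply',
      show Dh 1 ((Dh 1)^[k+1] (pc w)) x
        = (Dh 1)^[k+1] (pc w) (x+1) - (Dh 1)^[k+1] (pc w) x from rfl,
      ih (x+1) (by linarith), ih x hx, ← mul_sub,
      ← intervalIntegral.integral_sub (hint (x+1) (by linarith)) (hint x hx)]
    congr 1
    apply intervalIntegral.integral_congr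
    intro u hu
    rw [uIcc_of_le (by norm_num : (0:ℝ) ≤ 1)] at hu
    simp only [Function.iterate_succ_apply', Dh, show x+1+u = x+u+1 by ring]

end Stmt18aux

namespace Stmt18aux
open Complex

noncomputable def Ik (k : ℕ) (x β : ℝ) : ℝ :=
  ∫ v in Ioi (0:ℝ), Real.exp (-(x*v)) * (1 - Real.exp (-v))^k * v ^ (β-1)

lemma Ik_nonneg (k : ℕ) (x β : ℝ) : 0 ≤ Ik k x β := by
  apply setIntegral_nonneg measurableSet_Ioi
  intro v hv
  rw [mem_Ioi] at hv
  have h0 : (0:ℝ) ≤ 1 - Real.exp (-v) := by linarith [exp_neg_lt_one hv]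
  have h2 : (0:ℝ) ≤ v ^ (β-1) := Real.rpow_nonneg hv.le _
  positivity

lemma Ik_mono (k : ℕ) {x x' β : ℝ} (hx : 0 < x) (hβ : 0 < β) (h : x ≤ x') :
    Ik k x' β ≤ Ik k x β := by
  apply setIntegral_mono_on
    (integrableOn_one_sub_exp_pow_rpow (by linarith) hβ k)
    (integrableOn_one_sub_exp_pow_rpow hx hβ k) measurableSet_Ioi
  intro v hv
  rw [mem_Ioi] at hv
  have h0 : (0:ℝ) ≤ 1 - Real.exp (-v) := by linarith [exp_neg_lt_one hv]
  have h2 : (0:ℝ) ≤ v ^ (β-1) := Real.rpow_nonneg hv.le _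
  have h3 : Real.exp (-(x'*v)) ≤ Real.exp (-(x*v)) := by
    apply Real.exp_le_exp.mpr
    nlinarith
  apply mul_le_mul_of_nonneg_right (mul_le_mul_of_nonneg_right h3 (by positivity)) h2

lemma delta_of_zero_fun : ∀ n : ℕ, (Dh 1)^[n] (fun _ => (0:ℂ)) = fun _ => (0:ℂ) := by
  intro n
  induction n with
  | zero => rfl
  | succ n ih => rw [Function.iterate_succ_apply, show Dh 1 (fun _ => (0:ℂ)) = fun _ => (0:ℂ)
      from funext fun t => by simp [Dh], ih]

lemma delta_bound (m : ℕ) : ∀ s : ℂ, s.re < m → ∀ k : ℕ, ∀ x : ℝ, 0 < x →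
    ‖(Dh 1)^[k+m] (pc s) x‖
      ≤ (∏ i ∈ Finset.range m, ‖s - (i:ℕ)‖) * ‖(Gamma ((m:ℕ) - s))⁻¹‖ * Ik k x (m - s.re) := by
  induction m with
  | zero =>
    intro s hs k x hx
    have hs' : s.re < 0 := by simpa using hs
    have h0 : (((0:ℕ):ℂ) - s) = -s := by simp
    rw [Nat.add_zero, delta_eq_integral hs' k x hx, Finset.prod_range_zero, one_mul,
      norm_mul, one_div, norm_inv, h0]
    have heq : ∫ v in Ioi (0:ℝ), ‖Fc k s x v‖ = Ik k x (((0:ℕ):ℝ) - s.re) := by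
      refine setIntegral_congr_fun measurableSet_Ioi (fun v hv => ?_)
      rw [norm_Fc hv]
      norm_num
    calc ‖Gamma (-s)‖⁻¹ * ‖∫ v in Ioi (0:ℝ), Fc k s x v‖
        ≤ ‖Gamma (-s)‖⁻¹ * ∫ v in Ioi (0:ℝ), ‖Fc k s x v‖ :=
          mul_le_mul_of_nonneg_left (norm_integral_le_integral_norm _) (by positivity)
      _ = ‖(Gamma (-s))⁻¹‖ * Ik k x (((0:ℕ):ℝ) - s.re) := by rw [heq, norm_inv]
  | succ m ih =>
    intro s hs k x hx
    have hβ : (0:ℝ) < (m:ℝ) + 1 - s.re := by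
      push_cast at hs; linarith
    by_cases hs0 : s = 0
    · subst hs0
      have hpc : pc 0 = fun _ => (1:ℂ) := funext fun u => by simp [pc]
      have h1 : Dh 1 (pc 0) = fun _ => (0:ℂ) := funext fun t => by simp [Dh, hpc]
      have : (Dh 1)^[k + (m+1)] (pc 0) x = 0 := by
        have hkm : k + (m+1) = (k+m) + 1 := by ring
        rw [hkm, Function.iterate_succ_apply, h1, delta_of_zero_fun]
      rw [this, norm_zero]
      have : ∏ i ∈ Finset.range (m+1), ‖(0:ℂ) - (i:ℕ)‖ = 0 := by
        apply Finset.prod_eq_zero (Finset.mem_range.mpr (Nat.succ_pos m))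
        simp
      rw [this, zero_mul, zero_mul]
    · have hkm : k + (m+1) = (k+m) + 1 := by ring
      rw [hkm, delta_succ_eq_integral hs0 (k+m) x hx]
      have hre : (s-1).re < (m:ℝ) := by
        rw [Complex.sub_re, Complex.one_re]; push_cast at hs; linarith
      set C := (∏ i ∈ Finset.range m, ‖(s-1) - (i:ℕ)‖) * ‖(Gamma ((m:ℕ) - (s-1)))⁻¹‖
        * Ik k x (m - (s-1).re) with hC
      have hCnn : 0 ≤ C := by
        apply mul_nonneg (mul_nonneg (Finset.prod_nonneg fun _ _ => norm_nonneg _)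
          (norm_nonneg _)) (Ik_nonneg _ _ _)
      have hbound : ‖∫ u in (0:ℝ)..1, (Dh 1)^[k+m] (pc (s-1)) (x+u)‖ ≤ C := by
        have := intervalIntegral.norm_integral_le_of_norm_le_const
          (C := C) (a := (0:ℝ)) (b := 1)
          (f := fun u => (Dh 1)^[k+m] (pc (s-1)) (x+u)) ?_
        · simpa using this
        · intro u hu
          rw [Set.uIoc_of_le (by norm_num : (0:ℝ) ≤ 1)] at hu
          have hu0 : 0 < u := hu.1
          calc ‖(Dh 1)^[k+m] (pc (s-1)) (x+u)‖
              ≤ (∏ i ∈ Finset.range m, ‖(s-1) - (i:ℕ)‖) * ‖(Gamma ((m:ℕ) - (s-1)))⁻¹‖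
                * Ik k (x+u) (m - (s-1).re) := ih (s-1) hre k (x+u) (by linarith)
            _ ≤ C := by
                rw [hC]
                apply mul_le_mul_of_nonneg_left
                  (Ik_mono k hx (by rw [Complex.sub_re, Complex.one_re]; push_cast; linarith)
                    (by linarith))
                apply mul_nonneg (Finset.prod_nonneg fun _ _ => norm_nonneg _) (norm_nonneg _)
      have hprod : ∏ i ∈ Finset.range (m+1), ‖s - (i:ℕ)‖
          = ‖s‖ * ∏ i ∈ Finset.range m, ‖(s-1) - (i:ℕ)‖ := by
        rw [Finset.prod_range_succ']
        simp only [Nat.cast_zero, sub_zero]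
        rw [mul_comm]
        congr 1
        apply Finset.prod_congr rfl
        intro i _
        congr 1
        push_cast
        ring
      have hΓ : ((m:ℕ):ℂ) - (s-1) = (((m+1:ℕ)):ℂ) - s := by push_cast; ring
      have hβeq : ((m:ℕ):ℝ) - (s-1).re = ((m+1:ℕ):ℝ) - s.re := by
        rw [Complex.sub_re, Complex.one_re]; push_cast; ring
      rw [norm_mul]
      calc ‖s‖ * ‖∫ u in (0:ℝ)..1, (Dh 1)^[k+m] (pc (s-1)) (x+u)‖
          ≤ ‖s‖ * C := mul_le_mul_of_nonneg_left hbound (norm_nonneg _)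
        _ = (∏ i ∈ Finset.range (m+1), ‖s - (i:ℕ)‖) * ‖(Gamma (((m+1:ℕ)) - s))⁻¹‖
            * Ik k x ((m+1:ℕ) - s.re) := by
            rw [hC, hprod, ← hΓ, ← hβeq]; ring
      done

end Stmt18aux

namespace Stmt18aux
open Complex

lemma partial_log_bound {v : ℝ} (hv : 0 < v) (N : ℕ) :
    ∑ k ∈ Finset.range N, (1 - Real.exp (-v))^k / (k+1) ≤ 1 + v := by
  set y := 1 - Real.exp (-v) with hy
  have hy0 : 0 < y := by rw [hy]; linarith [exp_neg_lt_one hv]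
  have hy1 : y < 1 := by rw [hy]; linarith [Real.exp_pos (-v)]
  have hlog : HasSum (fun n : ℕ => y ^ (n + 1) / (n + 1)) (-Real.log (1 - y)) :=
    Real.hasSum_pow_div_log_of_abs_lt_one (by rw [abs_of_pos hy0]; exact hy1)
  have hval : -Real.log (1 - y) = v := by
    rw [hy, show 1 - (1 - Real.exp (-v)) = Real.exp (-v) by ring, Real.log_exp]; ring
  have hpart : ∑ k ∈ Finset.range N, y ^ (k+1) / (k+1) ≤ v := by
    rw [← hval]
    exact sum_le_hasSum _ (fun i _ => by positivity) hlog
  have hyineq : v / y ≤ 1 + v := by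
    rw [div_le_iff₀ hy0, hy]
    have := Real.add_one_le_exp v
    have h2 : (1 + v) * Real.exp (-v) ≤ 1 := by
      rw [Real.exp_neg]
      rw [mul_inv_le_iff₀ (Real.exp_pos v), one_mul]
      linarith
    nlinarith [Real.exp_pos (-v)]
  calc ∑ k ∈ Finset.range N, y^k / (k+1)
      = (∑ k ∈ Finset.range N, y^(k+1) / (k+1)) / y := by
        rw [Finset.sum_div]
        apply Finset.sum_congr rfl
        intro k _
        rw [pow_succ]
        field_simp
    _ ≤ v / y := by gcongr
    _ ≤ 1 + v := hyineq

lemma summable_Ik {x β : ℝ} (hx : 0 < x) (hβ : 0 < β) :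
    Summable (fun k : ℕ => Ik k x β / (k+1)) := by
  have hint : ∀ k : ℕ, IntegrableOn
      (fun v : ℝ => Real.exp (-(x*v)) * (1 - Real.exp (-v))^k * v ^ (β-1) / (k+1)) (Ioi 0) := by
    intro k
    exact (integrableOn_one_sub_exp_pow_rpow hx hβ k).div_const _
  have hgint : IntegrableOn
      (fun v : ℝ => Real.exp (-(x*v)) * (1+v) * v ^ (β-1)) (Ioi 0) := by
    have h1 := integrable_exp_rpow hx hβ
    have h2 := integrable_exp_rpow hx (by linarith : (0:ℝ) < β + 1)
    have h2' : IntegrableOn (fun v : ℝ => Real.exp (-(x*v)) * v ^ β) (Ioi 0) := by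
      refine IntegrableOn.congr_fun h2 (fun v hv => ?_) measurableSet_Ioi
      norm_num
    refine (IntegrableOn.congr_fun (h1.add h2') (fun v hv => ?_) measurableSet_Ioi :
      IntegrableOn _ _ _)
    rw [mem_Ioi] at hv
    simp only [Pi.add_apply]
    have : v ^ β = v ^ (β - 1) * v := by
      rw [show β = (β - 1) + 1 by ring, Real.rpow_add hv, Real.rpow_one]; ring_nf
    rw [this]
    ring
  apply summable_of_sum_range_le (c := ∫ v in Ioi (0:ℝ), Real.exp (-(x*v)) * (1+v) * v ^ (β-1))
  · intro k
    have := Ik_nonneg k x β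
    positivity
  · intro N
    have hsum : ∑ k ∈ Finset.range N, Ik k x β / (k+1)
        = ∫ v in Ioi (0:ℝ), ∑ k ∈ Finset.range N,
            Real.exp (-(x*v)) * (1 - Real.exp (-v))^k * v ^ (β-1) / (k+1) := by
      rw [integral_finset_sum _ (fun k _ => hint k)]
      apply Finset.sum_congr rfl
      intro k _
      rw [Ik, ← integral_div]
    rw [hsum]
    apply setIntegral_mono_on (integrable_finset_sum _ (fun k _ => hint k)) hgint
      measurableSet_Ioi
    intro v hv
    rw [mem_Ioi] at hv
    have h0 : (0:ℝ) ≤ 1 - Real.exp (-v) := by linarith [exp_neg_lt_one hv]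
    have hvp : (0:ℝ) ≤ v ^ (β-1) := Real.rpow_nonneg hv.le _
    have hE : (0:ℝ) ≤ Real.exp (-(x*v)) := (Real.exp_pos _).le
    calc ∑ k ∈ Finset.range N, Real.exp (-(x*v)) * (1 - Real.exp (-v))^k * v ^ (β-1) / (k+1)
        = (Real.exp (-(x*v)) * v ^ (β-1)) * ∑ k ∈ Finset.range N, (1 - Real.exp (-v))^k / (k+1) := by
          rw [Finset.mul_sum]
          apply Finset.sum_congr rfl
          intro k _
          ring
      _ ≤ (Real.exp (-(x*v)) * v ^ (β-1)) * (1 + v) := by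
          apply mul_le_mul_of_nonneg_left (partial_log_bound hv N) (by positivity)
      _ = Real.exp (-(x*v)) * (1+v) * v ^ (β-1) := by ring

lemma Ik_le_sum {k : ℕ} {x β β₁ β₂ : ℝ} (hx : 0 < x) (hβ₁ : 0 < β₁)
    (h1 : β₁ ≤ β) (h2 : β ≤ β₂) : Ik k x β ≤ Ik k x β₁ + Ik k x β₂ := by
  have hβ : 0 < β := lt_of_lt_of_le hβ₁ h1
  have hβ₂ : 0 < β₂ := lt_of_lt_of_le hβ h2
  have hint : IntegrableOn (fun v : ℝ =>
      Real.exp (-(x*v)) * (1 - Real.exp (-v))^k * v ^ (β₁-1)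
      + Real.exp (-(x*v)) * (1 - Real.exp (-v))^k * v ^ (β₂-1)) (Ioi 0) :=
    (integrableOn_one_sub_exp_pow_rpow hx hβ₁ k).add (integrableOn_one_sub_exp_pow_rpow hx hβ₂ k)
  have step : Ik k x β ≤ ∫ v in Ioi (0:ℝ),
      (Real.exp (-(x*v)) * (1 - Real.exp (-v))^k * v ^ (β₁-1)
      + Real.exp (-(x*v)) * (1 - Real.exp (-v))^k * v ^ (β₂-1)) := by
    apply setIntegral_mono_on (integrableOn_one_sub_exp_pow_rpow hx hβ k) hint measurableSet_Ioi
    intro v hv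
    rw [mem_Ioi] at hv
    have h0 : (0:ℝ) ≤ 1 - Real.exp (-v) := by linarith [exp_neg_lt_one hv]
    have hA : (0:ℝ) ≤ Real.exp (-(x*v)) * (1 - Real.exp (-v))^k := by positivity
    have hpow : v ^ (β-1) ≤ v ^ (β₁-1) + v ^ (β₂-1) := by
      rcases le_or_gt 1 v with hv1 | hv1
      · have : v ^ (β-1) ≤ v ^ (β₂-1) :=
          Real.rpow_le_rpow_of_exponent_le hv1 (by linarith)
        have := Real.rpow_nonneg (by linarith : (0:ℝ) ≤ v) (β₁-1)
        linarith
      · have : v ^ (β-1) ≤ v ^ (β₁-1) :=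
          Real.rpow_le_rpow_of_exponent_ge hv hv1.le (by linarith)
        have := Real.rpow_nonneg hv.le (β₂-1)
        linarith
    calc Real.exp (-(x*v)) * (1 - Real.exp (-v))^k * v ^ (β-1)
        = (Real.exp (-(x*v)) * (1 - Real.exp (-v))^k) * v ^ (β-1) := by ring
      _ ≤ (Real.exp (-(x*v)) * (1 - Real.exp (-v))^k) * (v ^ (β₁-1) + v ^ (β₂-1)) :=
          mul_le_mul_of_nonneg_left hpow hA
      _ = _ := by ring
  rw [integral_add (integrableOn_one_sub_exp_pow_rpow hx hβ₁ k)
    (integrableOn_one_sub_exp_pow_rpow hx hβ₂ k)] at step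
  exact step

end Stmt18aux

namespace Stmt18aux
open Complex

lemma delta_entire (n : ℕ) : ∀ x : ℝ, 0 < x →
    Differentiable ℂ (fun s : ℂ => (Dh 1)^[n] (pc s) x) := by
  induction n with
  | zero =>
    intro x hx
    simp only [Function.iterate_zero, id_eq, pc]
    have : (fun s : ℂ => ((x:ℝ):ℂ) ^ s) = fun s : ℂ => Complex.exp (Complex.log x * s) := by
      funext s
      rw [cpow_def_of_ne_zero (by exact_mod_cast hx.ne' : ((x:ℝ):ℂ) ≠ 0)]
    rw [this]
    exact differentiable_exp.comp ((differentiable_const _).mul differentiable_id)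
  | succ n ih =>
    intro x hx
    have : (fun s : ℂ => (Dh 1)^[n+1] (pc s) x)
        = fun s : ℂ => (Dh 1)^[n] (pc s) (x+1) - (Dh 1)^[n] (pc s) x := by
      funext s
      rw [Function.iterate_succ_apply']
      rfl
    rw [this]
    exact (ih (x+1) (by linarith)).sub (ih x hx)

lemma BTerm_entire (n : ℕ) {t : ℝ} (ht : 0 < t) :
    Differentiable ℂ (fun s : ℂ => BTerm 1 (pc s) n t) := by
  have : (fun s : ℂ => BTerm 1 (pc s) n t)
      = fun s : ℂ => ((-1:ℂ)^n / (n+1)) * (Dh 1)^[n] (pc s) t := rfl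
  rw [this]
  exact (differentiable_const _).mul (delta_entire n t ht)

lemma norm_BTerm (s : ℂ) (n : ℕ) (t : ℝ) :
    ‖BTerm 1 (pc s) n t‖ = ‖(Dh 1)^[n] (pc s) t‖ / (n+1) := by
  rw [BTerm, norm_mul, norm_div, norm_pow, norm_neg, norm_one, one_pow,
    show ((n:ℂ)+1) = ((n+1:ℝ):ℂ) by push_cast; ring, norm_real,
    Real.norm_of_nonneg (by positivity : (0:ℝ) ≤ (n:ℝ)+1)]
  ring

lemma key_ball (s₀ : ℂ) {t : ℝ} (ht : 0 < t) :
    ∃ M : ℕ → ℝ, Summable M ∧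
      ∀ s ∈ Metric.ball s₀ 1, ∀ n, ‖BTerm 1 (pc s) n t‖ ≤ M n := by
  obtain ⟨m, hm⟩ := exists_nat_gt (s₀.re + 2)
  set β₁ : ℝ := (m:ℝ) - s₀.re - 1 with hβ₁def
  set β₂ : ℝ := (m:ℝ) - s₀.re + 1 with hβ₂def
  have hβ₁ : 0 < β₁ := by rw [hβ₁def]; linarith
  have hβ₂ : 0 < β₂ := by rw [hβ₂def]; linarith
  -- bound for Gamma inverse on closed ball
  obtain ⟨C₂, hC₂⟩ := (isCompact_closedBall s₀ 1).exists_bound_of_continuousOn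
    (f := fun s : ℂ => (Gamma ((m:ℕ) - s))⁻¹)
    ((differentiable_one_div_Gamma.comp ((differentiable_const _).sub differentiable_id)).continuous.continuousOn)
  have hC₂0 : 0 ≤ C₂ := le_trans (norm_nonneg _) (hC₂ s₀ (Metric.mem_closedBall_self zero_le_one))
  -- bounds for small n on closed ball
  have hsmall : ∀ n : ℕ, ∃ b : ℝ, ∀ s ∈ Metric.closedBall s₀ 1, ‖BTerm 1 (pc s) n t‖ ≤ b := by
    intro n
    obtain ⟨b, hb⟩ := (isCompact_closedBall s₀ 1).exists_bound_of_continuousOn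
      (f := fun s : ℂ => BTerm 1 (pc s) n t) (BTerm_entire n ht).continuous.continuousOn
    exact ⟨b, hb⟩
  choose bs hbs using hsmall
  set C₁ : ℝ := ∏ i ∈ Finset.range m, (‖s₀‖ + 1 + i) with hC₁def
  have hC₁0 : 0 ≤ C₁ := Finset.prod_nonneg (fun i _ => by positivity)
  set M : ℕ → ℝ := fun n => if n < m then bs n
    else C₁ * C₂ * ((Ik (n-m) t β₁ + Ik (n-m) t β₂) / ((n-m:ℕ)+1)) with hMdef
  refine ⟨M, ?_, ?_⟩
  · rw [← summable_nat_add_iff m]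
    have : (fun k => M (k + m)) = fun k : ℕ =>
        C₁ * C₂ * ((Ik k t β₁ + Ik k t β₂) / ((k:ℝ)+1)) := by
      funext k
      rw [hMdef]
      simp only [Nat.add_sub_cancel]
      rw [if_neg (by omega)]
    rw [this]
    apply Summable.mul_left
    have := (summable_Ik ht hβ₁).add (summable_Ik ht hβ₂)
    refine this.congr (fun k => ?_)
    rw [add_div]
  · intro s hs n
    have hsre : s.re < (m:ℝ) ∧ β₁ ≤ (m:ℝ) - s.re ∧ (m:ℝ) - s.re ≤ β₂ := by
      have h1 : |(s - s₀).re| ≤ ‖s - s₀‖ := abs_re_le_norm _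
      rw [Metric.mem_ball, dist_eq_norm] at hs
      rw [Complex.sub_re] at h1
      constructor
      · cases abs_le.mp h1 with | intro hl hr => linarith
      · constructor
        · cases abs_le.mp h1 with | intro hl hr => rw [hβ₁def]; linarith
        · cases abs_le.mp h1 with | intro hl hr => rw [hβ₂def]; linarith
    by_cases hn : n < m
    · rw [hMdef]; beta_reduce; rw [if_pos hn]
      exact hbs n s (Metric.ball_subset_closedBall hs)
    · push_neg at hn
      set k : ℕ := n - m with hkdef
      have hnk : n = k + m := by omega
      have hbound := delta_bound m s hsre.1 k t ht
      have hprodle : ∏ i ∈ Finset.range m, ‖s - (i:ℕ)‖ ≤ C₁ := by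
        rw [hC₁def]
        apply Finset.prod_le_prod (fun i _ => norm_nonneg _)
        intro i _
        calc ‖s - (i:ℕ)‖ = ‖(s - s₀) + (s₀ - (i:ℕ))‖ := by ring_nf
          _ ≤ ‖s - s₀‖ + ‖s₀ - (i:ℕ)‖ := norm_add_le _ _
          _ ≤ 1 + (‖s₀‖ + i) := by
              apply add_le_add
              · rw [Metric.mem_ball, dist_eq_norm] at hs; linarith
              · refine le_trans (norm_sub_le _ _) ?_
                simp
          _ = ‖s₀‖ + 1 + i := by ring
      have hIkle : Ik k t ((m:ℝ) - s.re) ≤ Ik k t β₁ + Ik k t β₂ :=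
        Ik_le_sum ht hβ₁ hsre.2.1 hsre.2.2
      have hΓle : ‖(Gamma ((m:ℕ) - s))⁻¹‖ ≤ C₂ := hC₂ s (Metric.ball_subset_closedBall hs)
      rw [hMdef]
      beta_reduce
      rw [if_neg (by omega)]
      rw [norm_BTerm, hnk, Nat.add_sub_cancel]
      have hfrac : (1:ℝ) / ((k+m:ℕ)+1) ≤ 1 / ((k:ℝ)+1) := by
        apply one_div_le_one_div_of_le (by positivity)
        push_cast; linarith [Nat.cast_nonneg (α := ℝ) m]
      calc ‖(Dh 1)^[k+m] (pc s) t‖ / ((k+m:ℕ)+1)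
          ≤ ((∏ i ∈ Finset.range m, ‖s - (i:ℕ)‖) * ‖(Gamma ((m:ℕ) - s))⁻¹‖
              * Ik k t ((m:ℝ) - s.re)) / ((k+m:ℕ)+1) := by
            apply div_le_div_of_nonneg_right ?_ (by positivity)
            · exact hbound
        _ ≤ (C₁ * C₂ * (Ik k t β₁ + Ik k t β₂)) / ((k:ℝ)+1) := by
            apply div_le_div₀ (mul_nonneg (mul_nonneg hC₁0 hC₂0)
              (add_nonneg (Ik_nonneg _ _ _) (Ik_nonneg _ _ _)))
            · apply mul_le_mul
              · exact mul_le_mul hprodle hΓle (norm_nonneg _) hC₁0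
              · exact hIkle
              · exact Ik_nonneg _ _ _
              · positivity
            · positivity
            · push_cast; linarith [Nat.cast_nonneg (α := ℝ) m]
        _ = C₁ * C₂ * ((Ik k t β₁ + Ik k t β₂) / ((k:ℕ)+1)) := by
            push_cast; ring

end Stmt18aux

namespace Stmt18aux
open Complex

lemma hasSum_coeff_log {v : ℝ} (hv : 0 < v) :
    HasSum (fun n : ℕ => (1 - Real.exp (-v))^n / (n+1)) (v / (1 - Real.exp (-v))) := by
  set y := 1 - Real.exp (-v) with hy
  have hy0 : 0 < y := by rw [hy]; linarith [exp_neg_lt_one hv]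
  have hy1 : y < 1 := by rw [hy]; linarith [Real.exp_pos (-v)]
  have hlog : HasSum (fun n : ℕ => y ^ (n + 1) / (n + 1)) (-Real.log (1 - y)) :=
    Real.hasSum_pow_div_log_of_abs_lt_one (by rw [abs_of_pos hy0]; exact hy1)
  have hval : -Real.log (1 - y) = v := by
    rw [hy, show 1 - (1 - Real.exp (-v)) = Real.exp (-v) by ring, Real.log_exp]; ring
  rw [hval] at hlog
  have := hlog.div_const y
  refine this.congr_fun (fun n => ?_)
  rw [pow_succ]
  field_simp

lemma summable_inv_shift {σ : ℝ} (hσ : 1 < σ) {t : ℝ} (ht : 0 < t) :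
    Summable (fun k : ℕ => 1 / ((k:ℝ) + t) ^ σ) := by
  have := (Real.summable_one_div_nat_add_rpow t σ).mpr hσ
  refine this.congr (fun k => ?_)
  rw [abs_of_pos (by positivity : (0:ℝ) < (k:ℝ) + t)]

/-- The value of the Bernoulli series in the region `re s < 0`. -/
lemma hasSum_low {s : ℂ} (hs : s.re < 0) {t : ℝ} (ht : 0 < t) (ht1 : t ≤ 1) :
    HasSum (fun n : ℕ => BTerm 1 (pc s) n t)
      (-s * HurwitzZeta.hurwitzZeta (↑t : UnitAddCircle) (1-s)) := by
  have hs0 : s ≠ 0 := fun h => by rw [h] at hs; simp at hs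
  have hres : 0 < (-s).re := by simpa using (by linarith : -s.re > 0)
  have hG : Gamma (-s) ≠ 0 := Complex.Gamma_ne_zero_of_re_pos hres
  have hre1s : 1 < (1-s).re := by rw [Complex.sub_re, Complex.one_re]; linarith
  set Hr : ℝ → ℂ := fun v => ((Real.exp (-(t*v)) / (1 - Real.exp (-v)) : ℝ) : ℂ) with hHr
  -- Step A : sum of the series equals (1/Γ(-s)) * mellin Hr (1-s)
  set F : ℕ → ℝ → ℂ := fun n v => ((-1:ℂ)^n / (n+1)) * (Gamma (-s))⁻¹ * Fc n s t v with hF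
  have hint : ∀ n : ℕ, Integrable (F n) (volume.restrict (Ioi 0)) := by
    intro n
    exact ((integrable_Fc hs ht).const_mul _ : IntegrableOn _ _ _)
  have hBT : ∀ n : ℕ, BTerm 1 (pc s) n t = ∫ v in Ioi (0:ℝ), F n v := by
    intro n
    rw [BTerm, delta_eq_integral hs n t ht, hF]
    simp only
    rw [integral_const_mul, one_div]
    ring
  have hnormint : ∀ n : ℕ, ∫ v in Ioi (0:ℝ), ‖F n v‖
      = (1/((n:ℝ)+1)) * ‖(Gamma (-s))⁻¹‖ * Ik n t (-s.re) := by
    intro n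
    have hcoef : ‖((-1:ℂ)^n / (n+1)) * (Gamma (-s))⁻¹‖ = (1/((n:ℝ)+1)) * ‖(Gamma (-s))⁻¹‖ := by
      rw [norm_mul, norm_div, norm_pow, norm_neg, norm_one, one_pow,
        show ((n:ℂ)+1) = ((n+1:ℝ):ℂ) by push_cast; ring, norm_real,
        Real.norm_of_nonneg (by positivity : (0:ℝ) ≤ (n:ℝ)+1)]
    rw [show (1/((n:ℝ)+1)) * ‖(Gamma (-s))⁻¹‖ * Ik n t (-s.re)
        = ‖((-1:ℂ)^n / (n+1)) * (Gamma (-s))⁻¹‖ * Ik n t (-s.re) by rw [hcoef], Ik,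
      ← integral_const_mul]
    refine setIntegral_congr_fun measurableSet_Ioi (fun v hv => ?_)
    rw [mem_Ioi] at hv
    rw [hF]
    simp only
    rw [norm_mul, norm_Fc hv]
  have hsumnorm : Summable (fun n : ℕ => ∫ v in Ioi (0:ℝ), ‖F n v‖) := by
    rw [show (fun n : ℕ => ∫ v in Ioi (0:ℝ), ‖F n v‖)
        = fun n : ℕ => ‖(Gamma (-s))⁻¹‖ * (Ik n t (-s.re) / ((n:ℝ)+1)) from
      funext fun n => by rw [hnormint n]; ring]
    exact (summable_Ik ht (by linarith : (0:ℝ) < -s.re)).mul_left _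
  have hkey := MeasureTheory.hasSum_integral_of_summable_integral_norm hint hsumnorm
  -- identify the integral of the tsum
  have htsum_eq : ∀ v ∈ Ioi (0:ℝ), (∑' n : ℕ, F n v)
      = (Gamma (-s))⁻¹ * (Hr v * (v:ℂ)^((1-s)-1)) := by
    intro v hv
    rw [mem_Ioi] at hv
    have hyR : HasSum (fun n : ℕ => (1 - Real.exp (-v))^n / (n+1)) (v / (1 - Real.exp (-v))) :=
      hasSum_coeff_log hv
    have hyC : HasSum (fun n : ℕ => (((1 - Real.exp (-v))^n / (n+1) : ℝ) : ℂ))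
        ((v / (1 - Real.exp (-v)) : ℝ) : ℂ) := by
      exact Complex.ofRealCLM.hasSum hyR
    have hterm : ∀ n : ℕ, F n v
        = (((1 - Real.exp (-v))^n / (n+1) : ℝ) : ℂ)
          * ((Gamma (-s))⁻¹ * ((Real.exp (-(t*v)) : ℝ) : ℂ) * (v:ℂ)^(-s-1)) := by
      intro n
      have hsign : ((-1:ℂ)^n) * (((Real.exp (-v) : ℝ) : ℂ) - 1)^n
          = (((1 - Real.exp (-v) : ℝ)) : ℂ)^n := by
        rw [← neg_pow]
        push_cast
        ring_nf
      calc F n v = ((-1:ℂ)^n * ((((Real.exp (-v) : ℝ)) : ℂ) - 1)^n)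
            * (((n:ℂ)+1)⁻¹ * ((Gamma (-s))⁻¹ * ((Real.exp (-(t*v)) : ℝ) : ℂ) * (v:ℂ)^(-s-1))) := by
            simp only [hF, Fc]; ring
        _ = (((1 - Real.exp (-v) : ℝ)) : ℂ)^n
            * (((n:ℂ)+1)⁻¹ * ((Gamma (-s))⁻¹ * ((Real.exp (-(t*v)) : ℝ) : ℂ) * (v:ℂ)^(-s-1))) := by
            rw [hsign]
        _ = (((1 - Real.exp (-v))^n / (n+1) : ℝ) : ℂ)
            * ((Gamma (-s))⁻¹ * ((Real.exp (-(t*v)) : ℝ) : ℂ) * (v:ℂ)^(-s-1)) := by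
            push_cast
            ring
    rw [tsum_congr hterm, (hyC.mul_right _).tsum_eq]
    rw [hHr]
    simp only
    have hcv : ((1-s)-1) = -s - 1 + 1 := by ring
    rw [hcv, cpow_add _ _ (by exact_mod_cast hv.ne' : (v:ℂ) ≠ 0), cpow_one]
    have hme : (0:ℝ) < 1 - Real.exp (-v) := by linarith [exp_neg_lt_one hv]
    push_cast
    field_simp
  have hintcongr : ∫ v in Ioi (0:ℝ), (∑' n : ℕ, F n v)
      = (Gamma (-s))⁻¹ * mellin Hr (1-s) := by
    rw [setIntegral_congr_fun measurableSet_Ioi htsum_eq, integral_const_mul]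
    congr 1
    rw [mellin]
    refine setIntegral_congr_fun measurableSet_Ioi (fun v hv => ?_)
    rw [smul_eq_mul]
    ring
  rw [hintcongr] at hkey
  have hA : HasSum (fun n : ℕ => BTerm 1 (pc s) n t) ((Gamma (-s))⁻¹ * mellin Hr (1-s)) := by
    refine hkey.congr_fun (fun n => hBT n)
  -- Step B : mellin Hr (1-s) = Γ(1-s) * hurwitzZeta t (1-s)
  have hmel : HasSum (fun k : ℕ => Gamma (1-s) * (1:ℂ) / ((k:ℝ)+t : ℝ) ^ (1-s))
      (mellin Hr (1-s)) := by
    refine hasSum_mellin (fun k => Or.inr (by positivity : (0:ℝ) < (k:ℝ)+t)) (by linarith) ?_ ?_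
    · intro v hv
      rw [mem_Ioi] at hv
      rw [hHr]
      have hgeo : HasSum (fun k : ℕ => (Real.exp (-v))^k) (1 - Real.exp (-v))⁻¹ :=
        hasSum_geometric_of_lt_one (Real.exp_pos _).le (exp_neg_lt_one hv)
      have hgeo2 := hgeo.mul_left (Real.exp (-(t*v)))
      have hgeo3 : HasSum (fun k : ℕ => Real.exp (-(((k:ℝ)+t)*v)))
          (Real.exp (-(t*v)) / (1 - Real.exp (-v))) := by
        rw [div_eq_mul_inv]
        refine hgeo2.congr_fun (fun k => ?_)
        rw [← Real.exp_nat_mul, ← Real.exp_add]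
        congr 1
        ring
      have hC := Complex.ofRealCLM.hasSum hgeo3
      simp only [Complex.ofRealCLM_apply] at hC
      refine hC.congr_fun (fun k => ?_)
      rw [one_mul]
      congr 1
      ring
    · refine (summable_inv_shift hre1s ht).congr (fun k => ?_)
      rw [norm_one]
  have hζ := HurwitzZeta.hasSum_hurwitzZeta_of_one_lt_re (Set.mem_Icc.mpr ⟨ht.le, ht1⟩) hre1s
  have hmel' : mellin Hr (1-s)
      = Gamma (1-s) * HurwitzZeta.hurwitzZeta (↑t : UnitAddCircle) (1-s) := by
    refine hmel.unique ?_
    have hζ2 := hζ.mul_left (Gamma (1-s))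
    refine hζ2.congr_fun (fun k => ?_)
    rw [mul_div_assoc]
    push_cast
    ring
  rw [hmel'] at hA
  have hval : (Gamma (-s))⁻¹ * (Gamma (1-s) * HurwitzZeta.hurwitzZeta (↑t : UnitAddCircle) (1-s))
      = -s * HurwitzZeta.hurwitzZeta (↑t : UnitAddCircle) (1-s) := by
    rw [show (1:ℂ) - s = -s + 1 by ring, Complex.Gamma_add_one _ (neg_ne_zero.mpr hs0)]
    field_simp
  rw [← hval]
  exact hA

end Stmt18aux

namespace Stmt18aux
open Complex

lemma summable_BTerm (s : ℂ) {t : ℝ} (ht : 0 < t) :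
    Summable (fun n : ℕ => BTerm 1 (pc s) n t) := by
  obtain ⟨M, hM, hMb⟩ := key_ball s ht
  exact Summable.of_norm_bounded hM (fun n => hMb s (Metric.mem_ball_self one_pos) n)

lemma F_entire {t : ℝ} (ht : 0 < t) :
    Differentiable ℂ (fun s : ℂ => ∑' n : ℕ, BTerm 1 (pc s) n t) := by
  intro s₀
  obtain ⟨M, hM, hMb⟩ := key_ball s₀ ht
  have hd : DifferentiableOn ℂ (fun s : ℂ => ∑' n : ℕ, BTerm 1 (pc s) n t)
      (Metric.ball s₀ 1) := by
    refine differentiableOn_tsum_of_summable_norm hM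
      (fun n => (BTerm_entire n ht).differentiableOn) Metric.isOpen_ball ?_
    intro n w hw
    exact hMb w hw n
  exact hd.differentiableAt (Metric.isOpen_ball.mem_nhds (Metric.mem_ball_self one_pos))

lemma tsum_eq_all {t : ℝ} (ht : 0 < t) (ht1 : t ≤ 1) {s : ℂ} (hs : s ≠ 0) :
    ∑' n : ℕ, BTerm 1 (pc s) n t
      = -s * HurwitzZeta.hurwitzZeta (↑t : UnitAddCircle) (1-s) := by
  set f : ℂ → ℂ := fun s => ∑' n : ℕ, BTerm 1 (pc s) n t with hf
  set g : ℂ → ℂ := fun s => -s * HurwitzZeta.hurwitzZeta (↑t : UnitAddCircle) (1-s) with hg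
  have hU : IsOpen ({(0:ℂ)}ᶜ : Set ℂ) := isOpen_compl_singleton
  have hfa : AnalyticOnNhd ℂ f ({(0:ℂ)}ᶜ : Set ℂ) :=
    DifferentiableOn.analyticOnNhd ((F_entire ht).differentiableOn) hU
  have hga : AnalyticOnNhd ℂ g ({(0:ℂ)}ᶜ : Set ℂ) := by
    refine DifferentiableOn.analyticOnNhd (fun u hu => ?_) hU
    have hu0 : u ≠ 0 := hu
    have h1 : (1:ℂ) - u ≠ 1 := fun h => hu0 (by rwa [sub_eq_self] at h)
    have hd1 : DifferentiableAt ℂ (fun s : ℂ => HurwitzZeta.hurwitzZeta (↑t : UnitAddCircle) (1-s)) u := by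
      have := (HurwitzZeta.differentiableAt_hurwitzZeta (↑t : UnitAddCircle) h1)
      exact DifferentiableAt.comp u this (((differentiable_const (1:ℂ)).sub differentiable_id).differentiableAt)
    exact ((differentiable_id.neg.differentiableAt).mul hd1).differentiableWithinAt
  have hpre : IsPreconnected ({(0:ℂ)}ᶜ : Set ℂ) :=
    (isConnected_compl_singleton_of_one_lt_rank (by simp) _).isPreconnected
  have hmem : (-1:ℂ) ∈ ({(0:ℂ)}ᶜ : Set ℂ) := by norm_num
  have hev : f =ᶠ[nhds (-1:ℂ)] g := by
    have hopen : IsOpen {z : ℂ | z.re < 0} := isOpen_lt continuous_re continuous_const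
    have hmem2 : (-1:ℂ) ∈ {z : ℂ | z.re < 0} := by simp
    filter_upwards [hopen.mem_nhds hmem2] with z hz
    exact (hasSum_low hz ht ht1).tsum_eq
  have := hfa.eqOn_of_preconnected_of_eventuallyEq hga hpre hmem hev
  exact this hs

end Stmt18aux

namespace Stmt18aux
open Complex

lemma hurwitz_eq {t : ℝ} (ht : 0 < t) (ht1 : t ≤ 1) (w : ℂ) :
    hurwitz w t = HurwitzZeta.hurwitzZeta (↑t : UnitAddCircle) w := by
  rw [hurwitz]
  rcases eq_or_lt_of_le ht1 with h1 | h1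
  · rw [h1]
    norm_num
  · have h0 : ⌊t⌋₊ = 0 := Nat.floor_eq_zero.mpr h1
    rw [h0]
    simp

end Stmt18aux
/-- for `s ≠ 0` and `p_s(u) = u^s` (principal power), for every `t ∈ (0,1]`
the Bernoulli series `Σ_{n≥0} (−1)^n (Δ^n p_s)(t)/(n+1)` converges and its sum is
`−s ζ(1−s, t)`, where `ζ(·,·)` is the Hurwitz zeta function. -/

theorem stmt18 (s : ℂ) (hs : s ≠ 0) :
    ∀ t ∈ Ioc (0:ℝ) 1,
      HasSum (fun n : ℕ => BTerm 1 (fun u : ℝ => (u : ℂ) ^ s) n t)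
        (-s * hurwitz (1 - s) t) := by
  intro t ht
  obtain ⟨ht0, ht1⟩ := ht
  have h1 : (fun u : ℝ => (u:ℂ)^s) = Stmt18aux.pc s := rfl
  rw [h1, Stmt18aux.hurwitz_eq ht0 ht1]
  have hsum := (Stmt18aux.summable_BTerm s ht0).hasSum
  rwa [Stmt18aux.tsum_eq_all ht0 ht1 hs] at hsum
end

section
/- Let f ∈ ℋ and let s ∈ ℂ with s ≠ 0. Suppose that f(s, t) = m^{−s} f(s, m t) for every integer m ≥ 1 and every t > 0 (principal power m^{−s}). Then there exists c ∈ ℂ such that f(s, t) = c·t^s for all t > 0. -/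
open MeasureTheory Filter Set

/-- if `f ∈ ℋ`, `s ≠ 0`, and `f(s,t) = m^{−s} f(s, mt)` for every integer
`m ≥ 1` and every `t > 0`, then `f(s,·)` is a scalar multiple of `t ↦ t^s` on `(0,∞)`. -/
theorem stmt19 (f : ℂ → ℝ → ℂ) (hf : MemH f) (s : ℂ) (hs : s ≠ 0)
    (hscale : ∀ m : ℕ, 1 ≤ m → ∀ t ∈ Ioi (0:ℝ), f s t = (m : ℂ) ^ (-s) * f s (m * t)) :
    ∃ c : ℂ, ∀ t ∈ Ioi (0:ℝ), f s t = c * (t : ℂ) ^ s := by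
  obtain ⟨φ, hdiff, -⟩ := hf
  set g : ℝ → ℂ := fun t => f s t * (t : ℂ) ^ (-s) with hgdef
  -- continuity of g at every t > 0
  have hgc : ∀ t ∈ Ioi (0:ℝ), ContinuousAt g t := by
    intro t ht
    have h1 : ContinuousAt (f s) t := (hdiff s t ht).continuousAt
    have h2 : ContinuousAt (fun u : ℝ => ((u : ℂ)) ^ (-s)) t := by
      have hslit : ((t : ℂ)) ∈ Complex.slitPlane := by
        exact Or.inl (by simpa using ht)
      exact (continuousAt_cpow_const hslit).comp
        Complex.continuous_ofReal.continuousAt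
    exact h1.mul h2
  -- scaling invariance of g
  have hmul : ∀ m : ℕ, 1 ≤ m → ∀ t ∈ Ioi (0:ℝ), g ((m : ℝ) * t) = g t := by
    intro m hm t ht
    have ht0 : (0:ℝ) < t := ht
    have hm0 : (0:ℝ) < (m : ℝ) := by exact_mod_cast hm
    have hmt : (m : ℝ) * t ∈ Ioi (0:ℝ) := mul_pos hm0 ht0
    have hsplit : ((((m : ℝ) * t : ℝ) : ℂ)) ^ (-s)
        = ((m : ℝ) : ℂ) ^ (-s) * ((t : ℝ) : ℂ) ^ (-s) := by
      rw [Complex.ofReal_mul]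
      exact Complex.mul_cpow_ofReal_nonneg hm0.le ht0.le (-s)
    have hsc := hscale m hm t ht
    simp only [hgdef]
    rw [hsplit, hsc]
    push_cast
    ring
  -- g is constant on positive rationals
  have hrat : ∀ q : ℚ, 0 < q → g (q : ℝ) = g 1 := by
    intro q hq
    have hnum : 0 < q.num := Rat.num_pos.mpr hq
    have ha : 1 ≤ q.num.toNat := by omega
    have hb : 1 ≤ q.den := q.pos
    have hq0 : (0:ℝ) < (q : ℝ) := by exact_mod_cast hq
    have e1 : g ((q.den : ℝ) * (q : ℝ)) = g (q : ℝ) := hmul q.den hb _ hq0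
    have e2 : g ((q.num.toNat : ℝ) * 1) = g 1 := hmul q.num.toNat ha 1 (Set.mem_Ioi.mpr one_pos)
    have key : (q.den : ℝ) * (q : ℝ) = (q.num.toNat : ℝ) * 1 := by
      have h1 : ((q.num.toNat : ℝ)) = (q.num : ℝ) := by
        exact_mod_cast Int.toNat_of_nonneg hnum.le
      rw [mul_one, h1, Rat.cast_def]
      have hd : ((q.den : ℝ)) ≠ 0 := by positivity
      field_simp
    rw [← e1, key, e2]
  -- g is constant on all of Ioi 0, by density of rationals
  have hconst : ∀ t ∈ Ioi (0:ℝ), g t = g 1 := by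
    intro t ht
    have ht0 : (0:ℝ) < t := ht
    -- choose rationals q n ∈ (t, t + 1/(n+1))
    have hex : ∀ n : ℕ, ∃ q : ℚ, t < (q : ℝ) ∧ (q : ℝ) < t + 1 / (n + 1) := by
      intro n
      have : t < t + 1 / (n + 1) := by
        have : (0:ℝ) < 1 / (n + 1) := by positivity
        linarith
      exact exists_rat_btwn this
    choose q hq1 hq2 using hex
    have hqt : Tendsto (fun n : ℕ => ((q n : ℝ))) atTop (nhds t) := by
      have hub : Tendsto (fun n : ℕ => t + 1 / ((n : ℝ) + 1)) atTop (nhds t) := by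
        have := (tendsto_one_div_add_atTop_nhds_zero_nat :
          Tendsto (fun n : ℕ => 1 / ((n : ℝ) + 1)) atTop (nhds 0))
        have h := this.const_add t
        simpa using h
      exact tendsto_of_tendsto_of_tendsto_of_le_of_le tendsto_const_nhds hub
        (fun n => (hq1 n).le) (fun n => (hq2 n).le)
    have hgq : ∀ n, g ((q n : ℝ)) = g 1 := by
      intro n
      have hqn : (0:ℝ) < (q n : ℝ) := lt_trans ht0 (hq1 n)
      exact hrat (q n) (by exact_mod_cast hqn)
    have hlim : Tendsto (fun n => g ((q n : ℝ))) atTop (nhds (g t)) :=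
      (hgc t ht).tendsto.comp hqt
    have hlim' : Tendsto (fun n => g ((q n : ℝ))) atTop (nhds (g 1)) := by
      simp only [hgq]
      exact tendsto_const_nhds
    exact tendsto_nhds_unique hlim hlim'
  -- conclude
  refine ⟨g 1, fun t ht => ?_⟩
  have ht0 : (0:ℝ) < t := ht
  have htc : ((t : ℝ) : ℂ) ≠ 0 := by exact_mod_cast ht0.ne'
  have hpow : ((t : ℝ) : ℂ) ^ (-s) * ((t : ℝ) : ℂ) ^ s = 1 := by
    have hne : ((t : ℝ) : ℂ) ^ s ≠ 0 := by
      simp [Complex.cpow_eq_zero_iff, htc]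
    rw [Complex.cpow_neg]
    exact inv_mul_cancel₀ hne
  have := hconst t ht
  calc f s t = f s t * (((t : ℝ) : ℂ) ^ (-s) * ((t : ℝ) : ℂ) ^ s) := by
        rw [hpow, mul_one]
    _ = g t * ((t : ℝ) : ℂ) ^ s := by simp only [hgdef]; ring
    _ = g 1 * ((t : ℝ) : ℂ) ^ s := by rw [this]
end
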